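/- For all record types ρ₁, ρ₂ ∈ 𝕋_R: if lbl(ρ₁) ⊆ lbl(ρ₂) then ρ₁+ρ₂ = ρ₂. -/
import Mathlib


/-- Intersection and record types `𝕋`. Record types are the types satisfying `IsRec`. -/
inductive Ty where
  | const : Nat → Ty
  | omega : Ty
  | arrow : Ty → Ty → Ty
  | inter : Ty → Ty → Ty
  | empty : Ty
  | fld : Nat → Ty → Ty
  | merge : Ty → Ty → Ty
deriving DecidableEq

/-- The record types `𝕋_R ⊆ 𝕋`. -/
inductive IsRec : Ty → Prop where
  | empty : IsRec .empty
  | fld (l : Nat) (σ : Ty) : IsRec (.fld l σ)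
  | merge {ρ₁ ρ₂ : Ty} : IsRec ρ₁ → IsRec ρ₂ → IsRec (.merge ρ₁ ρ₂)
  | inter {ρ₁ ρ₂ : Ty} : IsRec ρ₁ → IsRec ρ₂ → IsRec (.inter ρ₁ ρ₂)

/-- Subtyping on `𝕋`: the least preorder satisfying the BCD axioms together with
the record and record-merge axioms. -/
inductive TySub : Ty → Ty → Prop where
  | refl (σ : Ty) : TySub σ σ
  | trans {σ τ υ : Ty} : TySub σ τ → TySub τ υ → TySub σ υ
  | le_omega (σ : Ty) : TySub σ .omega
  | omega_arrow : TySub .omega (.arrow .omega .omega)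
  | inter_left (σ τ : Ty) : TySub (.inter σ τ) σ
  | inter_right (σ τ : Ty) : TySub (.inter σ τ) τ
  | le_inter {σ τ₁ τ₂ : Ty} : TySub σ τ₁ → TySub σ τ₂ → TySub σ (.inter τ₁ τ₂)
  | arrow_inter (σ τ₁ τ₂ : Ty) :
      TySub (.inter (.arrow σ τ₁) (.arrow σ τ₂)) (.arrow σ (.inter τ₁ τ₂))
  | arrow_mono {σ₁ σ₂ τ₁ τ₂ : Ty} : TySub σ₂ σ₁ → TySub τ₁ τ₂ →
      TySub (.arrow σ₁ τ₁) (.arrow σ₂ τ₂)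
  | fld_empty (l : Nat) (σ : Ty) : TySub (.fld l σ) .empty
  | fld_inter (l : Nat) (σ τ : Ty) :
      TySub (.inter (.fld l σ) (.fld l τ)) (.fld l (.inter σ τ))
  | fld_mono {σ τ : Ty} (l : Nat) : TySub σ τ → TySub (.fld l σ) (.fld l τ)
  | merge_empty_r {ρ : Ty} : IsRec ρ → TySub (.merge ρ .empty) ρ
  | merge_empty_r' {ρ : Ty} : IsRec ρ → TySub ρ (.merge ρ .empty)
  | merge_empty_l {ρ : Ty} : IsRec ρ → TySub (.merge .empty ρ) ρ
  | merge_empty_l' {ρ : Ty} : IsRec ρ → TySub ρ (.merge .empty ρ)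
  | merge_assoc {ρ₁ ρ₂ ρ₃ : Ty} : IsRec ρ₁ → IsRec ρ₂ → IsRec ρ₃ →
      TySub (.merge (.merge ρ₁ ρ₂) ρ₃) (.merge ρ₁ (.merge ρ₂ ρ₃))
  | merge_assoc' {ρ₁ ρ₂ ρ₃ : Ty} : IsRec ρ₁ → IsRec ρ₂ → IsRec ρ₃ →
      TySub (.merge ρ₁ (.merge ρ₂ ρ₃)) (.merge (.merge ρ₁ ρ₂) ρ₃)
  | merge_inter {ρ₁ ρ₂ ρ₃ : Ty} : IsRec ρ₁ → IsRec ρ₂ → IsRec ρ₃ →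
      TySub (.merge (.inter ρ₁ ρ₂) ρ₃) (.inter (.merge ρ₁ ρ₃) (.merge ρ₂ ρ₃))
  | merge_inter' {ρ₁ ρ₂ ρ₃ : Ty} : IsRec ρ₁ → IsRec ρ₂ → IsRec ρ₃ →
      TySub (.inter (.merge ρ₁ ρ₃) (.merge ρ₂ ρ₃)) (.merge (.inter ρ₁ ρ₂) ρ₃)
  | fld_absorb {ρ : Ty} (l : Nat) (σ τ : Ty) : IsRec ρ →
      TySub (.merge (.fld l σ) (.inter (.fld l τ) ρ)) (.inter (.fld l τ) ρ)
  | fld_absorb' {ρ : Ty} (l : Nat) (σ τ : Ty) : IsRec ρ →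
      TySub (.inter (.fld l τ) ρ) (.merge (.fld l σ) (.inter (.fld l τ) ρ))
  | fld_comm {ρ : Ty} {l l' : Nat} (σ τ : Ty) : l ≠ l' → IsRec ρ →
      TySub (.merge (.fld l σ) (.inter (.fld l' τ) ρ))
          (.inter (.fld l' τ) (.merge (.fld l σ) ρ))
  | fld_comm' {ρ : Ty} {l l' : Nat} (σ τ : Ty) : l ≠ l' → IsRec ρ →
      TySub (.inter (.fld l' τ) (.merge (.fld l σ) ρ))
          (.merge (.fld l σ) (.inter (.fld l' τ) ρ))
  | merge_mono_l {ρ₁ ρ₂ ρ : Ty} : IsRec ρ₁ → IsRec ρ₂ → IsRec ρ →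
      TySub ρ₁ ρ₂ → TySub (.merge ρ₁ ρ) (.merge ρ₂ ρ)
  | merge_congr_r {ρ ρ₁ ρ₂ : Ty} : IsRec ρ → IsRec ρ₁ → IsRec ρ₂ →
      TySub ρ₁ ρ₂ → TySub ρ₂ ρ₁ → TySub (.merge ρ ρ₁) (.merge ρ ρ₂)

/-- Type equality: mutual subtyping. -/
def TyEq (σ τ : Ty) : Prop := TySub σ τ ∧ TySub τ σ
/-- The label map on record types. -/
def lbl : Ty → Finset Nat
  | .const _ => ∅
  | .omega => ∅
  | .arrow _ _ => ∅
  | .empty => ∅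
  | .fld l _ => {l}
  | .inter ρ₁ ρ₂ => lbl ρ₁ ∪ lbl ρ₂
  | .merge ρ₁ ρ₂ => lbl ρ₁ ∪ lbl ρ₂

/-! ### Auxiliary lemmas -/

theorem TyEq.refl' (σ : Ty) : TyEq σ σ := ⟨.refl σ, .refl σ⟩

theorem TyEq.symm' {σ τ : Ty} (h : TyEq σ τ) : TyEq τ σ := ⟨h.2, h.1⟩

theorem TyEq.trans' {σ τ υ : Ty} (h1 : TyEq σ τ) (h2 : TyEq τ υ) : TyEq σ υ :=
  ⟨h1.1.trans h2.1, h2.2.trans h1.2⟩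

theorem TySub.inter_mono {a a' b b' : Ty} (h1 : TySub a a') (h2 : TySub b b') :
    TySub (.inter a b) (.inter a' b') :=
  .le_inter ((TySub.inter_left a b).trans h1) ((TySub.inter_right a b).trans h2)

theorem TyEq.inter_congr {a a' b b' : Ty} (h1 : TyEq a a') (h2 : TyEq b b') :
    TyEq (.inter a b) (.inter a' b') := ⟨h1.1.inter_mono h2.1, h1.2.inter_mono h2.2⟩

theorem TyEq.merge_congr {a a' b b' : Ty} (ha : IsRec a) (ha' : IsRec a')
    (hb : IsRec b) (hb' : IsRec b') (h1 : TyEq a a') (h2 : TyEq b b') :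
    TyEq (.merge a b) (.merge a' b') :=
  ⟨(TySub.merge_mono_l ha ha' hb h1.1).trans (.merge_congr_r ha' hb hb' h2.1 h2.2),
   (TySub.merge_mono_l ha' ha hb' h1.2).trans (.merge_congr_r ha hb' hb h2.2 h2.1)⟩

theorem TyEq.inter_assoc (a b c : Ty) :
    TyEq (.inter a (.inter b c)) (.inter (.inter a b) c) :=
  ⟨.le_inter (.le_inter (.inter_left _ _) ((TySub.inter_right _ _).trans (.inter_left _ _)))
      ((TySub.inter_right _ _).trans (.inter_right _ _)),
   .le_inter ((TySub.inter_left _ _).trans (.inter_left _ _))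
      (.le_inter ((TySub.inter_left _ _).trans (.inter_right _ _)) (.inter_right _ _))⟩

theorem TyEq.inter_idem (a : Ty) : TyEq (.inter a a) a :=
  ⟨.inter_left _ _, .le_inter (.refl _) (.refl _)⟩

namespace MergeAbsorb

/-- Interpretation of a list of fields as a record type. -/
def toTy : List (Nat × Ty) → Ty
  | [] => .empty
  | (l, σ) :: L => .inter (.fld l σ) (toTy L)

/-- Insert a field into a list, keeping the existing field if the label occurs. -/
def ins (l : Nat) (σ : Ty) : List (Nat × Ty) → List (Nat × Ty)
  | [] => [(l, σ)]
  | (l', τ) :: L => if l = l' then (l', τ) :: L else (l', τ) :: ins l σ L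

/-- List-level merge (right-biased). -/
def mergeL : List (Nat × Ty) → List (Nat × Ty) → List (Nat × Ty)
  | [], B => B
  | (l, σ) :: A, B => ins l σ B ++ mergeL A B

def labels (L : List (Nat × Ty)) : Finset Nat := (L.map Prod.fst).toFinset

/-- Normal form of a record type. -/
def norm : Ty → List (Nat × Ty)
  | .empty => []
  | .fld l σ => [(l, σ)]
  | .inter a b => norm a ++ norm b
  | .merge a b => mergeL (norm a) (norm b)
  | _ => []

theorem isRec_toTy (L : List (Nat × Ty)) : IsRec (toTy L) := by
  induction L with
  | nil => exact .empty
  | cons p L ih => obtain ⟨l, σ⟩ := p; exact .inter (.fld l σ) ih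

theorem toTy_le_empty (L : List (Nat × Ty)) : TySub (toTy L) .empty := by
  induction L with
  | nil => exact .refl _
  | cons p L ih => obtain ⟨l, σ⟩ := p; exact (TySub.inter_right _ _).trans ih

theorem toTy_append (X Y : List (Nat × Ty)) :
    TyEq (toTy (X ++ Y)) (.inter (toTy X) (toTy Y)) := by
  induction X with
  | nil =>
    exact ⟨.le_inter (toTy_le_empty Y) (.refl _), .inter_right _ _⟩
  | cons p X ih =>
    obtain ⟨l, σ⟩ := p
    show TyEq (.inter (.fld l σ) (toTy (X ++ Y))) _
    exact (TyEq.inter_congr (TyEq.refl' _) ih).trans' (TyEq.inter_assoc _ _ _)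

theorem merge_fld (l : Nat) (σ : Ty) (L : List (Nat × Ty)) :
    TyEq (.merge (.fld l σ) (toTy L)) (toTy (ins l σ L)) := by
  induction L with
  | nil =>
    refine TyEq.trans' ⟨.merge_empty_r (.fld l σ), .merge_empty_r' (.fld l σ)⟩ ?_
    exact ⟨.le_inter (.refl _) (.fld_empty l σ), .inter_left _ _⟩
  | cons p L ih =>
    obtain ⟨l', τ⟩ := p
    by_cases h : l = l'
    · subst h
      show TyEq (.merge (.fld l σ) (.inter (.fld l τ) (toTy L))) (toTy (ins l σ ((l, τ) :: L)))
      simp only [ins, if_pos rfl]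
      exact ⟨.fld_absorb l σ τ (isRec_toTy L), .fld_absorb' l σ τ (isRec_toTy L)⟩
    · show TyEq (.merge (.fld l σ) (.inter (.fld l' τ) (toTy L))) (toTy (ins l σ ((l', τ) :: L)))
      simp only [ins, if_neg h]
      refine TyEq.trans'
        ⟨.fld_comm σ τ h (isRec_toTy L), .fld_comm' σ τ h (isRec_toTy L)⟩ ?_
      exact TyEq.inter_congr (TyEq.refl' _) ih

theorem merge_toTy (A B : List (Nat × Ty)) :
    TyEq (.merge (toTy A) (toTy B)) (toTy (mergeL A B)) := by
  induction A with
  | nil => exact ⟨.merge_empty_l (isRec_toTy B), .merge_empty_l' (isRec_toTy B)⟩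
  | cons p A ih =>
    obtain ⟨l, σ⟩ := p
    have h1 : TyEq (.merge (.inter (.fld l σ) (toTy A)) (toTy B))
        (.inter (.merge (.fld l σ) (toTy B)) (.merge (toTy A) (toTy B))) :=
      ⟨.merge_inter (.fld l σ) (isRec_toTy A) (isRec_toTy B),
       .merge_inter' (.fld l σ) (isRec_toTy A) (isRec_toTy B)⟩
    exact (h1.trans' (TyEq.inter_congr (merge_fld l σ B) ih)).trans'
      (TyEq.symm' (toTy_append _ _))

theorem norm_eq {ρ : Ty} (h : IsRec ρ) : TyEq ρ (toTy (norm ρ)) := by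
  induction h with
  | empty => exact TyEq.refl' _
  | fld l σ => exact ⟨.le_inter (.refl _) (.fld_empty l σ), .inter_left _ _⟩
  | inter h1 h2 ih1 ih2 =>
    exact (TyEq.inter_congr ih1 ih2).trans' (TyEq.symm' (toTy_append _ _))
  | merge h1 h2 ih1 ih2 =>
    exact (TyEq.merge_congr h1 (isRec_toTy _) h2 (isRec_toTy _) ih1 ih2).trans'
      (merge_toTy _ _)

theorem labels_cons (p : Nat × Ty) (L : List (Nat × Ty)) :
    labels (p :: L) = insert p.1 (labels L) := by simp [labels]

theorem labels_append (X Y : List (Nat × Ty)) : labels (X ++ Y) = labels X ∪ labels Y := by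
  simp [labels]

theorem labels_ins (l : Nat) (σ : Ty) (L : List (Nat × Ty)) :
    labels (ins l σ L) = insert l (labels L) := by
  induction L with
  | nil => simp [ins, labels]
  | cons p L ih =>
    obtain ⟨l', τ⟩ := p
    by_cases h : l = l'
    · subst h
      rw [show ins l σ ((l, τ) :: L) = (l, τ) :: L from by simp [ins],
        labels_cons]
      simp
    · simp only [ins, if_neg h, labels_cons, ih]
      ext x; simp; tauto

theorem labels_mergeL (A B : List (Nat × Ty)) :
    labels (mergeL A B) = labels A ∪ labels B := by
  induction A with
  | nil => simp [mergeL, labels]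
  | cons p A ih =>
    obtain ⟨l, σ⟩ := p
    show labels (ins l σ B ++ mergeL A B) = _
    rw [labels_append, labels_ins, ih, labels_cons]
    ext x; simp; tauto

theorem labels_norm {ρ : Ty} (h : IsRec ρ) : labels (norm ρ) = lbl ρ := by
  induction h with
  | empty => simp [norm, labels, lbl]
  | fld l σ => simp [norm, labels, lbl]
  | inter h1 h2 ih1 ih2 => rw [norm, labels_append, ih1, ih2, lbl]
  | merge h1 h2 ih1 ih2 => rw [norm, labels_mergeL, ih1, ih2, lbl]

theorem ins_eq_of_mem {l : Nat} (σ : Ty) {L : List (Nat × Ty)} (h : l ∈ labels L) :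
    ins l σ L = L := by
  induction L with
  | nil => simp [labels] at h
  | cons p L ih =>
    obtain ⟨l', τ⟩ := p
    by_cases he : l = l'
    · simp [ins, if_pos he]
    · rw [labels_cons] at h
      rcases Finset.mem_insert.1 h with h' | h'
      · exact absurd h' he
      · simp only [ins, if_neg he, ih h']

theorem mergeL_absorb {A B : List (Nat × Ty)} (h : labels A ⊆ labels B) :
    TyEq (toTy (mergeL A B)) (toTy B) := by
  induction A with
  | nil => exact TyEq.refl' _
  | cons p A ih =>
    obtain ⟨l, σ⟩ := p
    rw [labels_cons] at h
    have hl : l ∈ labels B := h (Finset.mem_insert_self _ _)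
    have hA : labels A ⊆ labels B := fun x hx => h (Finset.mem_insert_of_mem hx)
    show TyEq (toTy (ins l σ B ++ mergeL A B)) (toTy B)
    rw [ins_eq_of_mem σ hl]
    exact ((toTy_append _ _).trans'
      (TyEq.inter_congr (TyEq.refl' _) (ih hA))).trans' (TyEq.inter_idem _)

end MergeAbsorb

/-- If `lbl(ρ₁) ⊆ lbl(ρ₂)` then `ρ₁ + ρ₂ = ρ₂`. -/
theorem merge_absorb_of_labels_subset (ρ₁ ρ₂ : Ty) (h₁ : IsRec ρ₁) (h₂ : IsRec ρ₂)
    (hsub : lbl ρ₁ ⊆ lbl ρ₂) :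
    TyEq (.merge ρ₁ ρ₂) ρ₂ := by
  have e1 := MergeAbsorb.norm_eq h₁
  have e2 := MergeAbsorb.norm_eq h₂
  have hl : MergeAbsorb.labels (MergeAbsorb.norm ρ₁) ⊆ MergeAbsorb.labels (MergeAbsorb.norm ρ₂) := by
    rw [MergeAbsorb.labels_norm h₁, MergeAbsorb.labels_norm h₂]; exact hsub
  exact ((TyEq.merge_congr h₁ (MergeAbsorb.isRec_toTy _) h₂ (MergeAbsorb.isRec_toTy _) e1 e2).trans'
    (MergeAbsorb.merge_toTy _ _)).trans'
    ((MergeAbsorb.mergeL_absorb hl).trans' (TyEq.symm' e2))
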